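/- Assume strict feasibility, i.e., Pmax·∑_k b_k > η. Then for every global minimizer (x*, α*) of (P2) there exists λ* ≥ 0 such that for every k ∈ Fin K: if λ* < ι_k(α*) then x*_k = h_k² / (h_k² − λ*·b_k)², and if λ* ≥ ι_k(α*) then x*_k = α*·Pmax. -/
import Mathlib

open Finset

/-- Objective of problem (P2). -/
noncomputable def objP2 (K : ℕ) (h : Fin K → ℝ) (σ2 : ℝ)
    (x : Fin K → ℝ) (α : ℝ) : ℝ :=
  ∑ k, (h k) ^ 2 * x k - 2 * ∑ k, h k * Real.sqrt (x k) + α * σ2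

/-- Feasibility for problem (P2). -/
def FeasP2 (K : ℕ) (b : Fin K → ℝ) (η Pmax : ℝ)
    (x : Fin K → ℝ) (α : ℝ) : Prop :=
  (∑ k, b k * x k) ≥ η * α ∧ (∀ k, 0 ≤ x k ∧ x k ≤ Pmax * α) ∧ 0 < α

/-- The threshold function `ι_k(α)`. -/
noncomputable def iota (K : ℕ) (h b : Fin K → ℝ) (Pmax : ℝ)
    (k : Fin K) (α : ℝ) : ℝ :=
  (h k) ^ 2 / b k * (1 - 1 / (h k * Real.sqrt (α * Pmax)))

open Filter Topology

lemma sum_update_point {K : ℕ} (F : Fin K → ℝ → ℝ) (x : Fin K → ℝ) (k : Fin K) (t : ℝ) :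
    ∑ j, F j (Function.update x k t j) = ∑ j, F j (x j) + (F k t - F k (x k)) := by
  have h1 := Finset.add_sum_erase Finset.univ (fun j => F j (Function.update x k t j))
    (Finset.mem_univ k)
  have h2 := Finset.add_sum_erase Finset.univ (fun j => F j (x j)) (Finset.mem_univ k)
  have h3 : ∑ j ∈ Finset.univ.erase k, F j (Function.update x k t j)
      = ∑ j ∈ Finset.univ.erase k, F j (x j) := by
    refine Finset.sum_congr rfl fun j hj => ?_
    rw [Function.update_of_ne (Finset.ne_of_mem_erase hj)]
  simp only [Function.update_self] at h1
  rw [← h1, ← h2, h3]; ring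

lemma sqrt_diff {a c : ℝ} (ha : 0 ≤ a) (hc : 0 < c) :
    Real.sqrt c - Real.sqrt a = (c - a) / (Real.sqrt c + Real.sqrt a) := by
  have h1 : 0 < Real.sqrt c := Real.sqrt_pos.mpr hc
  have h2 : 0 ≤ Real.sqrt a := Real.sqrt_nonneg a
  rw [eq_div_iff (by positivity)]
  have e1 := Real.sq_sqrt hc.le
  have e2 := Real.sq_sqrt ha
  nlinarith [e1, e2]

lemma obj_update {K : ℕ} (h : Fin K → ℝ) (σ2 : ℝ) (x : Fin K → ℝ) (α : ℝ) (k : Fin K) (t : ℝ) :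
    objP2 K h σ2 (Function.update x k t) α
      = objP2 K h σ2 x α
        + (((h k) ^ 2 * t - 2 * h k * Real.sqrt t)
          - ((h k) ^ 2 * x k - 2 * h k * Real.sqrt (x k))) := by
  unfold objP2
  rw [sum_update_point (fun j v => (h j) ^ 2 * v) x k t,
    sum_update_point (fun j v => h j * Real.sqrt v) x k t]
  ring

lemma bsum_update {K : ℕ} (b : Fin K → ℝ) (x : Fin K → ℝ) (k : Fin K) (t : ℝ) :
    ∑ j, b j * (Function.update x k t j) = ∑ j, b j * x j + (b k * t - b k * x k) :=
  sum_update_point (fun j v => b j * v) x k t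

/-- At a minimizer every coordinate is strictly positive. -/
lemma pos_of_min {K : ℕ} (h b : Fin K → ℝ) (σ2 η Pmax : ℝ)
    (hh : ∀ k, 0 < h k) (hb : ∀ k, 0 < b k) (hP : 0 < Pmax)
    (x : Fin K → ℝ) (α : ℝ)
    (hfeas : FeasP2 K b η Pmax x α)
    (hmin : ∀ (y : Fin K → ℝ) (β : ℝ), FeasP2 K b η Pmax y β →
      objP2 K h σ2 x α ≤ objP2 K h σ2 y β) :
    ∀ k, 0 < x k := by
  intro k
  obtain ⟨hsum, hbox, hα⟩ := hfeas
  rcases lt_or_eq_of_le (hbox k).1 with hpos | hzero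
  · exact hpos
  exfalso
  set t : ℝ := min (Pmax * α) (1 / (h k) ^ 2) with ht
  have hhk := hh k
  have htpos : 0 < t := lt_min (by positivity) (by positivity)
  have hfeas' : FeasP2 K b η Pmax (Function.update x k t) α := by
    refine ⟨?_, ?_, hα⟩
    · rw [bsum_update]
      have : 0 ≤ b k * t - b k * x k := by
        rw [← hzero]; nlinarith [(hb k)]
      linarith [hsum]
    · intro j
      rcases eq_or_ne j k with rfl | hj
      · simp only [Function.update_self]
        exact ⟨htpos.le, min_le_left _ _⟩
      · rw [Function.update_of_ne hj]; exact hbox j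
  have hle := hmin _ _ hfeas'
  rw [obj_update] at hle
  have hs : Real.sqrt t ≤ 1 / h k := by
    rw [show (1:ℝ)/h k = Real.sqrt ((1/h k)^2) by rw [Real.sqrt_sq (by positivity)]]
    apply Real.sqrt_le_sqrt
    calc t ≤ 1 / (h k)^2 := min_le_right _ _
      _ = (1/h k)^2 := by field_simp
  have hst : 0 < Real.sqrt t := Real.sqrt_pos.mpr htpos
  have hsq := Real.sq_sqrt htpos.le
  have hs1 : Real.sqrt t * h k ≤ 1 := (le_div_iff₀ hhk).mp hs
  have e : (h k) ^ 2 * t = (h k * Real.sqrt t) ^ 2 := by rw [mul_pow, hsq]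
  have : (h k) ^ 2 * t - 2 * h k * Real.sqrt t < 0 := by
    nlinarith [e, mul_pos hhk hst, hs1]
  rw [← hzero] at hle
  simp only [Real.sqrt_zero] at hle
  nlinarith [hle]

/-- If `x j` is strictly below its cap, its marginal cost is nonnegative. -/
lemma grad_nonneg {K : ℕ} (h b : Fin K → ℝ) (σ2 η Pmax : ℝ)
    (hb : ∀ k, 0 < b k)
    (x : Fin K → ℝ) (α : ℝ)
    (hfeas : FeasP2 K b η Pmax x α)
    (hmin : ∀ (y : Fin K → ℝ) (β : ℝ), FeasP2 K b η Pmax y β →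
      objP2 K h σ2 x α ≤ objP2 K h σ2 y β)
    (j : Fin K) (hxj : 0 < x j) (hlt : x j < Pmax * α) :
    0 ≤ (h j) ^ 2 - h j / Real.sqrt (x j) := by
  obtain ⟨hsum, hbox, hα⟩ := hfeas
  set v := x j with hv
  have hsv : 0 < Real.sqrt v := Real.sqrt_pos.mpr hxj
  set g : ℝ → ℝ := fun ε => (h j) ^ 2 - 2 * h j / (Real.sqrt (v + ε) + Real.sqrt v) with hg
  have key : ∀ ε ∈ Set.Ioc (0:ℝ) (Pmax * α - v), 0 ≤ g ε := by
    intro ε hε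
    obtain ⟨hε0, hε1⟩ := hε
    have hfy : FeasP2 K b η Pmax (Function.update x j (v + ε)) α := by
      refine ⟨?_, ?_, hα⟩
      · rw [bsum_update]
        have : 0 ≤ b j * (v + ε) - b j * v := by nlinarith [hb j]
        linarith [hsum]
      · intro i
        rcases eq_or_ne i j with h' | hij
        · rw [h', Function.update_self]
          constructor <;> nlinarith
        · rw [Function.update_of_ne hij]; exact hbox i
    have hle := hmin _ _ hfy
    rw [obj_update] at hle
    have hsd : Real.sqrt (v + ε) - Real.sqrt v = ε / (Real.sqrt (v + ε) + Real.sqrt v) := by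
      have := sqrt_diff (a := v) (c := v + ε) hxj.le (by linarith); simpa using this
    have hden : 0 < Real.sqrt (v + ε) + Real.sqrt v := by
      have := Real.sqrt_nonneg (v + ε); linarith
    have hprod : 0 ≤ ε * g ε := by
      have hexp : (h j) ^ 2 * (v + ε) - 2 * h j * Real.sqrt (v + ε)
          - ((h j) ^ 2 * v - 2 * h j * Real.sqrt v) = ε * g ε := by
        rw [hg]
        simp only
        linear_combination (-2 * h j) * hsd
      rw [← hexp]
      rw [← hv] at hle
      linarith [hle]
    exact le_of_mul_le_mul_left (by simpa using hprod) hε0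
  have hlim : Tendsto g (𝓝[>] (0:ℝ)) (𝓝 ((h j) ^ 2 - h j / Real.sqrt v)) := by
    have hc : Tendsto (fun ε : ℝ => Real.sqrt (v + ε) + Real.sqrt v) (𝓝 0)
        (𝓝 (2 * Real.sqrt v)) := by
      have hcont : Continuous (fun ε : ℝ => Real.sqrt (v + ε) + Real.sqrt v) :=
        (Real.continuous_sqrt.comp (continuous_const.add continuous_id)).add continuous_const
      have := hcont.tendsto 0
      simpa [two_mul] using this
    have hgt : Tendsto g (𝓝 0) (𝓝 ((h j) ^ 2 - 2 * h j / (2 * Real.sqrt v))) :=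
      tendsto_const_nhds.sub (tendsto_const_nhds.div hc (by positivity))
    have heq : (h j) ^ 2 - 2 * h j / (2 * Real.sqrt v) = (h j) ^ 2 - h j / Real.sqrt v := by
      field_simp
    rw [heq] at hgt
    exact hgt.mono_left nhdsWithin_le_nhds
  refine ge_of_tendsto hlim ?_
  exact eventually_of_mem (Ioc_mem_nhdsGT (by linarith)) key

/-- Exchange lemma: moving mass from coordinate `k` to coordinate `j` (below its cap)
cannot decrease the objective, so the scaled marginals compare. -/
lemma exchange {K : ℕ} (h b : Fin K → ℝ) (σ2 η Pmax : ℝ)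
    (hb : ∀ k, 0 < b k)
    (x : Fin K → ℝ) (α : ℝ)
    (hfeas : FeasP2 K b η Pmax x α)
    (hmin : ∀ (y : Fin K → ℝ) (β : ℝ), FeasP2 K b η Pmax y β →
      objP2 K h σ2 x α ≤ objP2 K h σ2 y β)
    (k j : Fin K) (hkj : j ≠ k)
    (hxk : 0 < x k) (hxj : 0 < x j) (hltj : x j < Pmax * α) :
    ((h k) ^ 2 - h k / Real.sqrt (x k)) / b k
      ≤ ((h j) ^ 2 - h j / Real.sqrt (x j)) / b j := by
  obtain ⟨hsum, hbox, hα⟩ := hfeas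
  set u := x k with hu
  set v := x j with hv
  set c := b k with hc
  set d := b j with hd
  have hcp : 0 < c := hb k
  have hdp : 0 < d := hb j
  have hsu : 0 < Real.sqrt u := Real.sqrt_pos.mpr hxk
  have hsv : 0 < Real.sqrt v := Real.sqrt_pos.mpr hxj
  set g : ℝ → ℝ := fun ε =>
    ((h j) ^ 2 / d - 2 * h j / d / (Real.sqrt (v + ε / d) + Real.sqrt v))
      - ((h k) ^ 2 / c - 2 * h k / c / (Real.sqrt u + Real.sqrt (u - ε / c))) with hgdef
  have hε0 : 0 < min (c * u) (d * (Pmax * α - v)) := by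
    apply lt_min <;> nlinarith
  have key : ∀ ε ∈ Set.Ioc (0:ℝ) (min (c * u) (d * (Pmax * α - v))), 0 ≤ g ε := by
    intro ε hε
    obtain ⟨hεp, hεl⟩ := hε
    have hεcu : ε / c ≤ u := (div_le_iff₀ hcp).mpr (by
      have := le_trans hεl (min_le_left _ _); linarith)
    have hεdv : ε / d ≤ Pmax * α - v := (div_le_iff₀ hdp).mpr (by
      have := le_trans hεl (min_le_right _ _); linarith)
    have hεc : 0 < ε / c := by positivity
    have hεd : 0 < ε / d := by positivity
    set y := Function.update (Function.update x k (u - ε / c)) j (v + ε / d) with hy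
    have hyj : (Function.update x k (u - ε / c)) j = v := by
      rw [Function.update_of_ne hkj]
    have hfy : FeasP2 K b η Pmax y α := by
      refine ⟨?_, ?_, hα⟩
      · rw [hy, bsum_update, bsum_update, hyj]
        have e1 : c * (u - ε / c) - c * u = -ε := by field_simp; ring
        have e2 : d * (v + ε / d) - d * v = ε := by field_simp; ring
        linarith [hsum, e1, e2]
      · intro i
        rcases eq_or_ne i j with h' | hij
        · rw [hy, h', Function.update_self]
          constructor <;> nlinarith
        · rw [hy, Function.update_of_ne hij]
          rcases eq_or_ne i k with h' | hik
          · rw [h', Function.update_self]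
            have h2 := (hbox k).2
            rw [← hu] at h2
            constructor <;> linarith
          · rw [Function.update_of_ne hik]; exact hbox i
    have hle := hmin _ _ hfy
    rw [hy, obj_update, obj_update, hyj] at hle
    have hsd1 : Real.sqrt (v + ε / d) - Real.sqrt v
        = (ε / d) / (Real.sqrt (v + ε / d) + Real.sqrt v) := by
      have := sqrt_diff (a := v) (c := v + ε / d) hxj.le (by linarith)
      simpa using this
    have hsd2 : Real.sqrt u - Real.sqrt (u - ε / c)
        = (ε / c) / (Real.sqrt u + Real.sqrt (u - ε / c)) := by
      have := sqrt_diff (a := u - ε / c) (c := u) (by linarith) hxk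
      simpa using this
    have hden1 : 0 < Real.sqrt (v + ε / d) + Real.sqrt v := by
      have := Real.sqrt_nonneg (v + ε / d); linarith
    have hden2 : 0 < Real.sqrt u + Real.sqrt (u - ε / c) := by
      have := Real.sqrt_nonneg (u - ε / c); linarith
    have hprod : 0 ≤ ε * g ε := by
      have hexp : ((h j) ^ 2 * (v + ε / d) - 2 * h j * Real.sqrt (v + ε / d)
            - ((h j) ^ 2 * v - 2 * h j * Real.sqrt v))
          + ((h k) ^ 2 * (u - ε / c) - 2 * h k * Real.sqrt (u - ε / c)
            - ((h k) ^ 2 * u - 2 * h k * Real.sqrt u)) = ε * g ε := by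
        rw [hgdef]
        simp only
        linear_combination (-2 * h j) * hsd1 + 2 * h k * hsd2
      rw [← hu] at hle
      rw [← hexp]
      linarith [hle]
    exact le_of_mul_le_mul_left (by simpa using hprod) hεp
  have hlim : Tendsto g (𝓝[>] (0:ℝ))
      (𝓝 (((h j) ^ 2 - h j / Real.sqrt v) / d - ((h k) ^ 2 - h k / Real.sqrt u) / c)) := by
    have hc1 : Tendsto (fun ε : ℝ => Real.sqrt (v + ε / d) + Real.sqrt v) (𝓝 0)
        (𝓝 (2 * Real.sqrt v)) := by
      have hcont : Continuous (fun ε : ℝ => Real.sqrt (v + ε / d) + Real.sqrt v) :=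
        (Real.continuous_sqrt.comp (continuous_const.add (continuous_id.div_const d))).add
          continuous_const
      have := hcont.tendsto 0
      simpa [two_mul] using this
    have hc2 : Tendsto (fun ε : ℝ => Real.sqrt u + Real.sqrt (u - ε / c)) (𝓝 0)
        (𝓝 (2 * Real.sqrt u)) := by
      have hcont : Continuous (fun ε : ℝ => Real.sqrt u + Real.sqrt (u - ε / c)) :=
        continuous_const.add
          (Real.continuous_sqrt.comp (continuous_const.sub (continuous_id.div_const c)))
      have := hcont.tendsto 0
      simpa [two_mul] using this
    have hgt : Tendsto g (𝓝 0)
        (𝓝 (((h j) ^ 2 / d - 2 * h j / d / (2 * Real.sqrt v))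
          - ((h k) ^ 2 / c - 2 * h k / c / (2 * Real.sqrt u)))) := by
      exact (tendsto_const_nhds.sub (tendsto_const_nhds.div hc1 (by positivity))).sub
        (tendsto_const_nhds.sub (tendsto_const_nhds.div hc2 (by positivity)))
    have heq : ((h j) ^ 2 / d - 2 * h j / d / (2 * Real.sqrt v))
          - ((h k) ^ 2 / c - 2 * h k / c / (2 * Real.sqrt u))
        = ((h j) ^ 2 - h j / Real.sqrt v) / d - ((h k) ^ 2 - h k / Real.sqrt u) / c := by
      field_simp
    rw [heq] at hgt
    exact hgt.mono_left nhdsWithin_le_nhds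
  have hfin : 0 ≤ ((h j) ^ 2 - h j / Real.sqrt v) / d - ((h k) ^ 2 - h k / Real.sqrt u) / c := by
    refine ge_of_tendsto hlim ?_
    exact eventually_of_mem (Ioc_mem_nhdsGT hε0) key
  linarith

theorem stmt_8 (K : ℕ) (hK : 1 ≤ K) (h b : Fin K → ℝ)
    (hh : ∀ k, 0 < h k) (hb : ∀ k, 0 < b k)
    (σ2 η Pmax : ℝ) (hσ : 0 < σ2) (hη : 0 < η) (hP : 0 < Pmax)
    (hstrict : Pmax * ∑ k, b k > η)
    (x : Fin K → ℝ) (α : ℝ)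
    (hfeas : FeasP2 K b η Pmax x α)
    (hmin : ∀ (y : Fin K → ℝ) (β : ℝ), FeasP2 K b η Pmax y β →
      objP2 K h σ2 x α ≤ objP2 K h σ2 y β) :
    ∃ lam : ℝ, 0 ≤ lam ∧ ∀ k,
      (lam < iota K h b Pmax k α →
        x k = (h k) ^ 2 / ((h k) ^ 2 - lam * b k) ^ 2) ∧
      (iota K h b Pmax k α ≤ lam → x k = α * Pmax) := by
  have hα : 0 < α := hfeas.2.2
  have hpos : ∀ k, 0 < x k := pos_of_min h b σ2 η Pmax hh hb hP x α hfeas hmin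
  have hsP : 0 < Real.sqrt (α * Pmax) := Real.sqrt_pos.mpr (by positivity)
  set μ : Fin K → ℝ := fun k => ((h k) ^ 2 - h k / Real.sqrt (x k)) / b k with hμ
  -- `iota` expressed like `μ` at the cap
  have hiota : ∀ k, iota K h b Pmax k α
      = ((h k) ^ 2 - h k / Real.sqrt (Pmax * α)) / b k := by
    intro k
    unfold iota
    rw [show Pmax * α = α * Pmax by ring]
    have := hh k
    have := hb k
    field_simp
  -- strictly-below-cap coordinates have `μ k < iota k`
  have hmu_lt : ∀ k, x k < Pmax * α → μ k < iota K h b Pmax k α := by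
    intro k hk
    rw [hiota k, hμ]
    simp only
    apply div_lt_div_of_pos_right ?_ (hb k)
    have hs1 : 0 < Real.sqrt (x k) := Real.sqrt_pos.mpr (hpos k)
    have hs2 : Real.sqrt (x k) < Real.sqrt (Pmax * α) := Real.sqrt_lt_sqrt (hpos k).le hk
    have := div_lt_div_of_pos_left (hh k) hs1 hs2
    linarith
  -- capped coordinates have `μ k = iota k`
  have hmu_eq : ∀ k, x k = Pmax * α → μ k = iota K h b Pmax k α := by
    intro k hk
    rw [hiota k, hμ]
    simp only
    rw [hk]
  by_cases hall : ∀ k, x k = Pmax * α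
  · -- all coordinates capped
    refine ⟨∑ k, max 0 (iota K h b Pmax k α), ?_, ?_⟩
    · exact Finset.sum_nonneg fun k _ => le_max_left _ _
    · intro k
      have hub : iota K h b Pmax k α ≤ ∑ i, max 0 (iota K h b Pmax i α) :=
        le_trans (le_max_right 0 _)
          (Finset.single_le_sum (f := fun i => max 0 (iota K h b Pmax i α))
            (fun i _ => le_max_left _ _) (Finset.mem_univ k))
      exact ⟨fun hlt => absurd hlt (not_lt.mpr hub),
        fun _ => by rw [hall k]; ring⟩
  · -- some coordinate strictly below cap
    push_neg at hall
    obtain ⟨k0, hk0⟩ := hall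
    have hk0lt : x k0 < Pmax * α := lt_of_le_of_ne (hfeas.2.1 k0).2 hk0
    refine ⟨μ k0, ?_, ?_⟩
    · have := grad_nonneg h b σ2 η Pmax hb x α hfeas hmin k0 (hpos k0) hk0lt
      rw [hμ]
      exact div_nonneg this (hb k0).le
    · intro k
      by_cases hcap : x k = Pmax * α
      · -- capped coordinate: iota k ≤ μ k0
        have hkk0 : k0 ≠ k := by
          rintro rfl; exact hk0 hcap
        have hle : μ k ≤ μ k0 :=
          exchange h b σ2 η Pmax hb x α hfeas hmin k k0 hkk0 (hpos k) (hpos k0) hk0lt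
        rw [hmu_eq k hcap] at hle
        exact ⟨fun hlt => absurd hlt (not_lt.mpr hle),
          fun _ => by rw [hcap]; ring⟩
      · -- free coordinate: μ k = μ k0
        have hklt : x k < Pmax * α := lt_of_le_of_ne (hfeas.2.1 k).2 hcap
        have heqμ : μ k = μ k0 := by
          rcases eq_or_ne k k0 with rfl | hne
          · rfl
          · have h1 : μ k ≤ μ k0 :=
              exchange h b σ2 η Pmax hb x α hfeas hmin k k0
                (fun hc => hne hc.symm) (hpos k) (hpos k0) hk0lt
            have h2 : μ k0 ≤ μ k :=
              exchange h b σ2 η Pmax hb x α hfeas hmin k0 k hne (hpos k0) (hpos k) hklt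
            linarith
        have hltι : μ k0 < iota K h b Pmax k α := heqμ ▸ hmu_lt k hklt
        refine ⟨fun _ => ?_, fun hge => absurd hltι (not_lt.mpr hge)⟩
        -- the closed form for free coordinates
        have hsx : 0 < Real.sqrt (x k) := Real.sqrt_pos.mpr (hpos k)
        have hlb : μ k0 * b k = (h k) ^ 2 - h k / Real.sqrt (x k) := by
          rw [← heqμ, hμ]
          simp only
          exact div_mul_cancel₀ _ (hb k).ne'
        have he : (h k) ^ 2 - μ k0 * b k = h k / Real.sqrt (x k) := by
          rw [hlb]; ring
        rw [he, div_pow, Real.sq_sqrt (hpos k).le]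
        rw [eq_div_iff (div_pos (pow_pos (hh k) 2) (hpos k)).ne']
        rw [mul_div_assoc', mul_div_cancel_left₀ _ (hpos k).ne']
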